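/- arXiv:1711.08306 — 9 statements merged into one kernel-verified Lean document; each statement's English description precedes it below -/
import Mathlib

section
/- For a finite field F_q of characteristic p and any nonzero i in F_p, T_{0i} = T_{i0} = T_{10} = T_{01}. -/
private lemma aux_inv_card (p : ℕ) [Fact p.Prime] (F : Type*) [Field F] [Fintype F]
    [Algebra (ZMod p) F] (a b : ZMod p) :
    Nat.card {x : F | x ≠ 0 ∧ Algebra.trace (ZMod p) F x = a ∧ Algebra.trace (ZMod p) F x⁻¹ = b} =
      Nat.card {x : F | x ≠ 0 ∧ Algebra.trace (ZMod p) F x = b ∧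
        Algebra.trace (ZMod p) F x⁻¹ = a} := by
  refine Nat.card_congr ⟨fun x => ⟨x.1⁻¹, ?_⟩, fun x => ⟨x.1⁻¹, ?_⟩, ?_, ?_⟩
  · obtain ⟨h0, h1, h2⟩ := x.2
    exact ⟨inv_ne_zero h0, h2, by rw [inv_inv]; exact h1⟩
  · obtain ⟨h0, h1, h2⟩ := x.2
    exact ⟨inv_ne_zero h0, h2, by rw [inv_inv]; exact h1⟩
  · intro x; ext; exact inv_inv _
  · intro x; ext; exact inv_inv _

private lemma aux_scale_card (p : ℕ) [Fact p.Prime] (F : Type*) [Field F] [Fintype F]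
    [Algebra (ZMod p) F] (a b c : ZMod p) (hc : c ≠ 0) :
    Nat.card {x : F | x ≠ 0 ∧ Algebra.trace (ZMod p) F x = a ∧ Algebra.trace (ZMod p) F x⁻¹ = b} =
      Nat.card {x : F | x ≠ 0 ∧ Algebra.trace (ZMod p) F x = c * a ∧
        Algebra.trace (ZMod p) F x⁻¹ = c⁻¹ * b} := by
  have hcF : (algebraMap (ZMod p) F) c ≠ 0 := by
    simpa using (map_ne_zero (algebraMap (ZMod p) F)).2 hc
  have key : ∀ (d : ZMod p) (x : F), Algebra.trace (ZMod p) F ((algebraMap (ZMod p) F d) * x)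
      = d * Algebra.trace (ZMod p) F x := by
    intro d x
    rw [← Algebra.smul_def, map_smul, smul_eq_mul]
  refine Nat.card_congr ⟨fun x => ⟨(algebraMap (ZMod p) F c) * x.1, ?_⟩,
    fun x => ⟨(algebraMap (ZMod p) F c)⁻¹ * x.1, ?_⟩, ?_, ?_⟩
  · obtain ⟨h0, h1, h2⟩ := x.2
    refine ⟨mul_ne_zero hcF h0, by rw [key, h1], ?_⟩
    rw [mul_inv, ← map_inv₀, mul_comm, mul_comm _ ((algebraMap (ZMod p) F) c⁻¹), key, h2]
  · obtain ⟨h0, h1, h2⟩ := x.2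
    refine ⟨mul_ne_zero (inv_ne_zero hcF) h0, ?_, ?_⟩
    · rw [← map_inv₀, key, h1, ← mul_assoc, inv_mul_cancel₀ hc, one_mul]
    · rw [mul_inv, inv_inv, key, h2, ← mul_assoc, mul_inv_cancel₀ hc, one_mul]
  · intro x; ext; simp [← mul_assoc, inv_mul_cancel₀ hcF]
  · intro x; ext; simp [← mul_assoc, mul_inv_cancel₀ hcF]

theorem trace_cotrace_zero_cases (p : ℕ) [Fact p.Prime] (F : Type*) [Field F] [Fintype F]
    [Algebra (ZMod p) F] (i : ZMod p) (hi : i ≠ 0) :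
    (Nat.card {x : F | x ≠ 0 ∧ Algebra.trace (ZMod p) F x = 0 ∧ Algebra.trace (ZMod p) F x⁻¹ = i} =
      Nat.card {x : F | x ≠ 0 ∧ Algebra.trace (ZMod p) F x = i ∧
        Algebra.trace (ZMod p) F x⁻¹ = 0}) ∧
    (Nat.card {x : F | x ≠ 0 ∧ Algebra.trace (ZMod p) F x = i ∧ Algebra.trace (ZMod p) F x⁻¹ = 0} =
      Nat.card {x : F | x ≠ 0 ∧ Algebra.trace (ZMod p) F x = 1 ∧
        Algebra.trace (ZMod p) F x⁻¹ = 0}) ∧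
    (Nat.card {x : F | x ≠ 0 ∧ Algebra.trace (ZMod p) F x = 1 ∧ Algebra.trace (ZMod p) F x⁻¹ = 0} =
      Nat.card {x : F | x ≠ 0 ∧ Algebra.trace (ZMod p) F x = 0 ∧
        Algebra.trace (ZMod p) F x⁻¹ = 1}) := by
  refine ⟨aux_inv_card p F 0 i, ?_, aux_inv_card p F 1 0⟩
  have h := aux_scale_card p F i 0 i⁻¹ (inv_ne_zero hi)
  rwa [inv_mul_cancel₀ hi, inv_inv, mul_zero] at h
end

section
/- For a finite field F_q of characteristic p, T_{00} = (p-1)·Σ_{s=1}^{p-1} T_{1s} + 2q/p - q - 1. -/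
open Finset

attribute [local instance] Classical.propDecidable

section Aux

variable (p : ℕ) [Fact p.Prime] (F : Type*) [Field F] [Fintype F] [Algebra (ZMod p) F]

noncomputable def trT (i j : ZMod p) : ℕ :=
  (Finset.univ.filter fun x : F =>
    x ≠ 0 ∧ Algebra.trace (ZMod p) F x = i ∧ Algebra.trace (ZMod p) F x⁻¹ = j).card

variable {p F}

lemma trT_eq_natCard (i j : ZMod p) :
    (Nat.card {x : F | x ≠ 0 ∧ Algebra.trace (ZMod p) F x = i ∧
      Algebra.trace (ZMod p) F x⁻¹ = j}) = trT p F i j := by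
  rw [Nat.card_coe_set_eq, Set.ncard_eq_toFinset_card', Set.toFinset_setOf, trT]

lemma card_fiber (i : ZMod p) :
    p * (univ.filter fun x : F => Algebra.trace (ZMod p) F x = i).card = Fintype.card F := by
  have hM : Module.Finite (ZMod p) F := Module.Finite.of_finite
  have hsurj := Algebra.trace_surjective (ZMod p) F
  have hfib : ∀ a b : ZMod p,
      (univ.filter fun x : F => Algebra.trace (ZMod p) F x = a).card =
      (univ.filter fun x : F => Algebra.trace (ZMod p) F x = b).card := by
    intro a b
    obtain ⟨t, ht⟩ := hsurj (b - a)
    refine Finset.card_bij' (fun x _ => x + t) (fun x _ => x - t) ?_ ?_ ?_ ?_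
    · intro x hx
      simp only [mem_filter, mem_univ, true_and] at hx ⊢
      rw [map_add, hx, ht]; ring
    · intro x hx
      simp only [mem_filter, mem_univ, true_and] at hx ⊢
      rw [map_sub, hx, ht]; ring
    · intro x _; ring
    · intro x _; ring
  have htot : ∑ a : ZMod p, (univ.filter fun x : F => Algebra.trace (ZMod p) F x = a).card
      = Fintype.card F := by
    rw [← Finset.card_univ]
    exact (Finset.card_eq_sum_card_fiberwise (fun x _ => mem_univ _)).symm
  calc p * (univ.filter fun x : F => Algebra.trace (ZMod p) F x = i).card
      = ∑ _a : ZMod p, (univ.filter fun x : F => Algebra.trace (ZMod p) F x = i).card := by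
        rw [Finset.sum_const, card_univ, ZMod.card, smul_eq_mul]
    _ = Fintype.card F := by rw [← htot]; exact Finset.sum_congr rfl fun a _ => hfib i a

lemma trSmulInv (c : ZMod p) (x : F) : (c • x)⁻¹ = c⁻¹ • x⁻¹ := by
  rw [Algebra.smul_def, Algebra.smul_def, mul_inv, map_inv₀]

lemma trT_smul {c : ZMod p} (hc : c ≠ 0) (i j : ZMod p) :
    trT p F i j = trT p F (c * i) (c⁻¹ * j) := by
  refine Finset.card_bij' (fun x _ => c • x) (fun x _ => c⁻¹ • x) ?_ ?_ ?_ ?_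
  · intro x hx
    simp only [mem_filter, mem_univ, true_and] at hx ⊢
    obtain ⟨h0, h1, h2⟩ := hx
    refine ⟨smul_ne_zero hc h0, ?_, ?_⟩
    · rw [map_smul, h1, smul_eq_mul]
    · rw [trSmulInv, map_smul, h2, smul_eq_mul]
  · intro x hx
    simp only [mem_filter, mem_univ, true_and] at hx ⊢
    obtain ⟨h0, h1, h2⟩ := hx
    refine ⟨smul_ne_zero (inv_ne_zero hc) h0, ?_, ?_⟩
    · rw [map_smul, h1, smul_eq_mul, ← mul_assoc, inv_mul_cancel₀ hc, one_mul]
    · rw [trSmulInv, map_smul, h2, smul_eq_mul, inv_inv, ← mul_assoc,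
        mul_inv_cancel₀ hc, one_mul]
  · intro x _; rw [smul_smul, inv_mul_cancel₀ hc, one_smul]
  · intro x _; rw [smul_smul, mul_inv_cancel₀ hc, one_smul]

lemma trT_comm (i j : ZMod p) : trT p F i j = trT p F j i := by
  refine Finset.card_bij' (fun x _ => x⁻¹) (fun x _ => x⁻¹) ?_ ?_ ?_ ?_ <;>
    intro x hx <;> simp only [mem_filter, mem_univ, true_and] at hx ⊢
  · exact ⟨inv_ne_zero hx.1, hx.2.2, by rw [inv_inv]; exact hx.2.1⟩
  · exact ⟨inv_ne_zero hx.1, hx.2.2, by rw [inv_inv]; exact hx.2.1⟩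
  · rw [inv_inv]
  · rw [inv_inv]

lemma trT_zero_right {j : ZMod p} (hj : j ≠ 0) : trT p F 0 j = trT p F 0 1 := by
  have := trT_smul (F := F) (inv_ne_zero hj) 0 1
  rw [mul_zero, inv_inv, mul_one] at this
  exact this.symm

lemma trT_one_mul {i : ZMod p} (hi : i ≠ 0) (j : ZMod p) :
    trT p F i j = trT p F 1 (i * j) := by
  have := trT_smul (F := F) (inv_ne_zero hi) i j
  rwa [inv_mul_cancel₀ hi, inv_inv] at this


lemma sum_trT_total :
    (∑ i : ZMod p, ∑ j : ZMod p, trT p F i j) + 1 = Fintype.card F := by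
  have h1 : (univ.filter fun x : F => x ≠ 0).card
      = ∑ ij : ZMod p × ZMod p, trT p F ij.1 ij.2 := by
    rw [Finset.card_eq_sum_card_fiberwise
      (f := fun x : F => (Algebra.trace (ZMod p) F x, Algebra.trace (ZMod p) F x⁻¹))
      (t := univ) (fun x _ => mem_univ _)]
    refine Finset.sum_congr rfl fun ij _ => ?_
    rw [trT, Finset.filter_filter]
    congr 1
    ext x
    simp [Prod.ext_iff, and_assoc]
  have h0 : (univ.filter fun x : F => x ≠ 0).card + 1 = Fintype.card F := by
    rw [Finset.filter_ne', Finset.card_erase_of_mem (mem_univ 0), card_univ]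
    have := Fintype.card_pos (α := F)
    omega
  rw [← h0, h1]
  congr 1
  exact (Fintype.sum_prod_type (f := fun ij : ZMod p × ZMod p => trT p F ij.1 ij.2)).symm

lemma sum_trT_zero :
    (∑ j : ZMod p, trT p F 0 j) + 1
      = (univ.filter fun x : F => Algebra.trace (ZMod p) F x = 0).card := by
  have h1 : ((univ.filter fun x : F => Algebra.trace (ZMod p) F x = 0).filter
      fun x : F => x ≠ 0).card = ∑ j : ZMod p, trT p F 0 j := by
    rw [Finset.card_eq_sum_card_fiberwise
      (f := fun x : F => Algebra.trace (ZMod p) F x⁻¹) (t := univ) (fun x _ => mem_univ _)]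
    refine Finset.sum_congr rfl fun j _ => ?_
    rw [trT, Finset.filter_filter, Finset.filter_filter]
    congr 1
    ext x
    simp only [mem_filter, mem_univ, true_and]
    tauto
  rw [← h1, Finset.filter_ne',
    Finset.card_erase_of_mem (by simp [Finset.mem_filter])]
  have : 0 < (univ.filter fun x : F => Algebra.trace (ZMod p) F x = 0).card :=
    Finset.card_pos.mpr ⟨0, by simp⟩
  omega

end Aux

theorem trace_cotrace_T00 (p m : ℕ) [Fact p.Prime] (hm : 1 ≤ m) (F : Type*) [Field F] [Fintype F]
    [Algebra (ZMod p) F] (hq : Fintype.card F = p ^ m) :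
    (Nat.card {x : F | x ≠ 0 ∧ Algebra.trace (ZMod p) F x = 0 ∧
        Algebra.trace (ZMod p) F x⁻¹ = 0} : ℤ) =
      ((p : ℤ) - 1) * (∑ s ∈ Finset.Icc 1 (p - 1),
        (Nat.card {x : F | x ≠ 0 ∧ Algebra.trace (ZMod p) F x = 1 ∧
          Algebra.trace (ZMod p) F x⁻¹ = (s : ZMod p)} : ℤ)) +
      2 * (p : ℤ) ^ (m - 1) - (p : ℤ) ^ m - 1 := by
  have hp : 2 ≤ p := (Fact.out : p.Prime).two_le
  set T00 := trT p F 0 0 with hT00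
  set c1 := trT p F 0 1 with hc1
  set S := ∑ s ∈ (univ : Finset (ZMod p)).erase 0, trT p F 1 s with hS
  have hsplit0 : ∑ j : ZMod p, trT p F 0 j = T00 + (p - 1) * c1 := by
    rw [← Finset.add_sum_erase _ _ (mem_univ (0 : ZMod p))]
    congr 1
    rw [Finset.sum_congr rfl (fun j hj => trT_zero_right (Finset.ne_of_mem_erase hj)),
      Finset.sum_const, Finset.card_erase_of_mem (mem_univ _), card_univ, ZMod.card, smul_eq_mul]
  have e2n : p * (T00 + (p - 1) * c1 + 1) = p ^ m := by
    rw [← hq, ← card_fiber (F := F) (0 : ZMod p), ← sum_trT_zero, hsplit0]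
  have hrow : ∀ i ∈ (univ : Finset (ZMod p)).erase 0,
      ∑ j : ZMod p, trT p F i j = c1 + S := by
    intro i hi
    have hi0 : i ≠ 0 := Finset.ne_of_mem_erase hi
    rw [← Finset.add_sum_erase _ _ (mem_univ (0 : ZMod p))]
    congr 1
    · rw [trT_comm, trT_zero_right hi0]
    · rw [Finset.sum_congr rfl (fun j _ => trT_one_mul hi0 j), hS]
      refine Finset.sum_equiv (Equiv.mulLeft₀ i hi0) ?_ ?_
      · intro j
        simp [hi0]
      · intro j hj
        simp
  have e1n : T00 + (p - 1) * c1 + ((p - 1) * (c1 + S) + 1) = p ^ m := by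
    rw [← hq, ← sum_trT_total (p := p) (F := F),
      ← Finset.add_sum_erase _ _ (mem_univ (0 : ZMod p)), hsplit0,
      Finset.sum_congr rfl hrow, Finset.sum_const, Finset.card_erase_of_mem (mem_univ _),
      card_univ, ZMod.card, smul_eq_mul]
    ring
  have hIcc : ∑ s ∈ Finset.Icc 1 (p - 1), trT p F 1 ((s : ℕ) : ZMod p) = S := by
    rw [hS]
    refine Finset.sum_nbij' (fun s => ((s : ℕ) : ZMod p)) (fun a => ZMod.val a)
      ?_ ?_ ?_ ?_ ?_
    · intro s hs
      simp only [Finset.mem_Icc] at hs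
      have hlt : s < p := by omega
      simp only [Finset.mem_erase, Finset.mem_univ, and_true]
      rw [Ne, ZMod.natCast_eq_zero_iff]
      intro hdvd
      have := Nat.le_of_dvd (by omega) hdvd
      omega
    · intro a ha
      simp only [Finset.mem_erase, Finset.mem_univ, and_true] at ha
      have h1 : a.val ≠ 0 := fun h => ha ((ZMod.val_eq_zero a).mp h)
      have h2 : a.val < p := ZMod.val_lt a
      simp only [Finset.mem_Icc]
      omega
    · intro s hs
      simp only [Finset.mem_Icc] at hs
      exact ZMod.val_cast_of_lt (by omega)
    · intro a ha
      simp [ZMod.natCast_val, ZMod.cast_id]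
    · intro s hs
      rfl
  rw [trT_eq_natCard]
  have hcast : ∀ s : ℕ, (Nat.card {x : F | x ≠ 0 ∧ Algebra.trace (ZMod p) F x = 1 ∧
      Algebra.trace (ZMod p) F x⁻¹ = (s : ZMod p)} : ℤ) = (trT p F 1 ((s : ℕ) : ZMod p) : ℤ) :=
    fun s => by rw [trT_eq_natCard]
  rw [Finset.sum_congr rfl (fun s _ => hcast s), ← Nat.cast_sum, hIcc]
  zify [show 1 ≤ p from by omega] at e1n e2n
  have hpm : (p : ℤ) ^ m = (p : ℤ) ^ (m - 1) * p := by
    rw [← pow_succ]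
    congr 1
    omega
  have e2' : (T00 : ℤ) + ((p : ℤ) - 1) * c1 + 1 = (p : ℤ) ^ (m - 1) := by
    have hp0 : (p : ℤ) ≠ 0 := by positivity
    apply mul_left_cancel₀ hp0
    rw [e2n, hpm]
    ring
  linear_combination 2 * e2' - e1n
end

section
/- For any prime p, Σ_{u=1}^{p-1} K(u)^2 = p^2 - p - 1, where K(u) is the Kloosterman sum over F_p. -/
/-- The Kloosterman sum over the prime field `F_p`. -/
noncomputable def kloosterman (p : ℕ) [Fact p.Prime] (u : ZMod p) : ℂ :=
  ∑ x ∈ (Finset.univ \ {0} : Finset (ZMod p)),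
    Complex.exp (2 * Real.pi * Complex.I * ((x + u * x⁻¹).val : ℂ) / p)

theorem sum_kloosterman_sq (p : ℕ) [Fact p.Prime] :
    ∑ u ∈ (Finset.univ \ {0} : Finset (ZMod p)), kloosterman p u ^ 2 =
      (p : ℂ) ^ 2 - p - 1 := by
  classical
  have hp : p.Prime := Fact.out
  have hp0 : p ≠ 0 := hp.ne_zero
  have hprim : IsPrimitiveRoot (Complex.exp (2 * Real.pi * Complex.I / p)) p :=
    Complex.isPrimitiveRoot_exp p hp0
  have hζ : Complex.exp (2 * Real.pi * Complex.I / p) ^ p = 1 := hprim.pow_eq_one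
  set ψ : AddChar (ZMod p) ℂ := AddChar.zmodChar p hζ with hψdef
  have hψprim : ψ.IsPrimitive := AddChar.zmodChar_primitive_of_primitive_root p hprim
  have hψ : ∀ a : ZMod p,
      Complex.exp (2 * Real.pi * Complex.I * (a.val : ℂ) / p) = ψ a := by
    intro a
    rw [hψdef, AddChar.zmodChar_apply, ← Complex.exp_nat_mul]
    congr 1
    ring
  have hK : ∀ u : ZMod p, kloosterman p u =
      ∑ x ∈ (Finset.univ \ {0} : Finset (ZMod p)), ψ (x + u * x⁻¹) :=
    fun u => Finset.sum_congr rfl fun x _ => hψ _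
  have hψne : ψ ≠ 1 := by
    have := hψprim (a := 1) one_ne_zero
    rwa [AddChar.mulShift_one] at this
  have hsumψ : ∑ a : ZMod p, ψ a = 0 := AddChar.sum_eq_zero_of_ne_one hψne
  have hsum : ∀ b : ZMod p, ∑ u : ZMod p, ψ (u * b) = if b = 0 then (p : ℂ) else 0 := by
    intro b
    rw [AddChar.sum_mulShift b hψprim]
    simp [ZMod.card]
  -- value at 0
  have hK0 : kloosterman p 0 = -1 := by
    rw [hK 0]
    have : ∑ x ∈ (Finset.univ \ {0} : Finset (ZMod p)), ψ (x + 0 * x⁻¹) =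
        ∑ x ∈ (Finset.univ \ {0} : Finset (ZMod p)), ψ x := by
      refine Finset.sum_congr rfl fun x _ => by rw [zero_mul, add_zero]
    rw [this, Finset.sum_sdiff_eq_sub (Finset.subset_univ _), hsumψ]
    simp
  -- total sum over all u
  have hT : ∑ u : ZMod p, kloosterman p u ^ 2 = (p : ℂ) ^ 2 - p := by
    have expand : ∀ u : ZMod p, kloosterman p u ^ 2 =
        ∑ x ∈ (Finset.univ \ {0} : Finset (ZMod p)),
          ∑ y ∈ (Finset.univ \ {0} : Finset (ZMod p)),
            ψ (x + y) * ψ (u * (x⁻¹ + y⁻¹)) := by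
      intro u
      rw [hK, sq, Finset.sum_mul_sum]
      refine Finset.sum_congr rfl fun x _ => Finset.sum_congr rfl fun y _ => ?_
      rw [← AddChar.map_add_eq_mul, ← AddChar.map_add_eq_mul]
      ring_nf
    calc ∑ u : ZMod p, kloosterman p u ^ 2
        = ∑ x ∈ (Finset.univ \ {0} : Finset (ZMod p)),
            ∑ y ∈ (Finset.univ \ {0} : Finset (ZMod p)),
              ψ (x + y) * ∑ u : ZMod p, ψ (u * (x⁻¹ + y⁻¹)) := by
          simp_rw [expand]
          rw [Finset.sum_comm]
          refine Finset.sum_congr rfl fun x _ => ?_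
          rw [Finset.sum_comm]
          exact Finset.sum_congr rfl fun y _ => (Finset.mul_sum _ _ _).symm
      _ = ∑ x ∈ (Finset.univ \ {0} : Finset (ZMod p)),
            ∑ y ∈ (Finset.univ \ {0} : Finset (ZMod p)),
              (if y = -x then ψ (x + y) * p else 0) := by
          refine Finset.sum_congr rfl fun x hx => Finset.sum_congr rfl fun y hy => ?_
          simp only [Finset.mem_sdiff, Finset.mem_singleton] at hx hy
          rw [hsum]
          have hcond : (x⁻¹ + y⁻¹ = 0) ↔ (y = -x) := by
            constructor
            · intro h
              have : y⁻¹ = (-x)⁻¹ := by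
                rw [← neg_inv]
                linear_combination h
              have := congrArg (·⁻¹) this
              simpa [inv_inv] using this
            · intro h
              rw [h, ← neg_inv]
              ring
          rw [if_congr hcond rfl rfl]
          split_ifs with h
          · ring
          · ring
      _ = ∑ x ∈ (Finset.univ \ {0} : Finset (ZMod p)), ψ (x + -x) * p := by
          refine Finset.sum_congr rfl fun x hx => ?_
          simp only [Finset.mem_sdiff, Finset.mem_singleton] at hx
          have hmem : -x ∈ (Finset.univ \ {0} : Finset (ZMod p)) := by
            simp [neg_eq_zero, hx.2]
          rw [Finset.sum_ite_eq' _ (-x) (fun y => ψ (x + y) * p), if_pos hmem]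
      _ = (p : ℂ) ^ 2 - p := by
          have : ∀ x : ZMod p, ψ (x + -x) * (p : ℂ) = (p : ℂ) := by
            intro x
            rw [add_neg_cancel, AddChar.map_zero_eq_one, one_mul]
          rw [Finset.sum_congr rfl fun x _ => this x, Finset.sum_const]
          have hcard : (Finset.univ \ {0} : Finset (ZMod p)).card = p - 1 := by
            rw [Finset.card_sdiff_of_subset (by simp), Finset.card_univ, ZMod.card,
              Finset.card_singleton]
          rw [hcard, nsmul_eq_mul]
          have hp1 : 1 ≤ p := hp.one_lt.le
          push_cast [Nat.cast_sub hp1]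
          ring
  -- finish
  have hsplit : ∑ u : ZMod p, kloosterman p u ^ 2 =
      (∑ u ∈ (Finset.univ \ {0} : Finset (ZMod p)), kloosterman p u ^ 2) +
        kloosterman p 0 ^ 2 := by
    rw [Finset.sum_sdiff_eq_sub (Finset.subset_univ _)]
    simp
  have := hsplit ▸ hT
  rw [hK0] at this
  linear_combination this
end

section
/- For any prime p > 2 and any c in F_p^* with c ≠ 1, Σ_{u=1}^{p-1} K(u)·K(cu) = -p - 1, where K denotes the Kloosterman sum over F_p. -/
/-!
Work over any finite field of order `q` with a primitive additive character `ψ`. Expand both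
Kloosterman sums and sum over `u` first: orthogonality of `ψ` turns `∑_{u ≠ 0} ψ (u (x⁻¹ + c y⁻¹))`
into `q [x⁻¹ + c y⁻¹ = 0] - 1`. The indicator selects the line `y = -c x` and contributes
`q ∑_{x ≠ 0} ψ (x (1 - c)) = -q` because `c ≠ 1`, while the `-1` contributes
`-(∑_{x ≠ 0} ψ x)² = -1`.
-/

open Finset

lemma inv_add_mul_inv_eq_zero_iff {F : Type*} [Field F] {x y : F} (c : F) (hx : x ≠ 0)
    (hy : y ≠ 0) :
    x⁻¹ + c * y⁻¹ = 0 ↔ y = -(c * x) := by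
  field_simp
  constructor <;> intro h <;> linear_combination h

namespace AddChar

variable {F R : Type*} [Field F] [Fintype F] [DecidableEq F] [CommRing R] [IsDomain R]

def kloostermanSum (ψ : AddChar F R) (u : F) : R :=
  ∑ x ∈ univ \ {0}, ψ (x + u * x⁻¹)

variable {ψ : AddChar F R}

lemma sum_nonzero_mulShift (hψ : ψ.IsPrimitive) (t : F) :
    ∑ a ∈ univ \ {0}, ψ (a * t) = (if t = 0 then (Fintype.card F : R) else 0) - 1 := by
  rw [sdiff_singleton_eq_erase, sum_erase_eq_sub (mem_univ 0), sum_mulShift t hψ, zero_mul,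
    map_zero_eq_one, Nat.cast_ite, Nat.cast_zero]

lemma sum_nonzero_eq_neg_one (hψ : ψ.IsPrimitive) : ∑ a ∈ univ \ {0}, ψ a = -1 := by
  simpa using sum_nonzero_mulShift hψ 1

lemma sum_kloostermanSum_mul_eq (hψ : ψ.IsPrimitive) (c : F) :
    ∑ u ∈ univ \ {0}, kloostermanSum ψ u * kloostermanSum ψ (c * u) =
      ∑ x ∈ univ \ {0}, ∑ y ∈ univ \ {0},
        ψ (x + y) * ((if x⁻¹ + c * y⁻¹ = 0 then (Fintype.card F : R) else 0) - 1) := by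
  simp_rw [kloostermanSum, sum_mul_sum]
  rw [sum_comm]
  refine sum_congr rfl fun x _ => ?_
  rw [sum_comm]
  refine sum_congr rfl fun y _ => ?_
  rw [← sum_nonzero_mulShift hψ, mul_sum]
  refine sum_congr rfl fun u _ => ?_
  rw [← map_add_eq_mul, ← map_add_eq_mul]
  congr 1
  ring

lemma sum_nonzero_add_mul_ite_sub_one (hψ : ψ.IsPrimitive) {c x : F} (hc : c ≠ 0) (hx : x ≠ 0) :
    ∑ y ∈ univ \ {0}, ψ (x + y) * ((if x⁻¹ + c * y⁻¹ = 0 then (Fintype.card F : R) else 0) - 1) =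
      Fintype.card F * ψ (x * (1 - c)) + ψ x := by
  have hline : ∑ y ∈ univ \ {0},
      ψ (x + y) * (if x⁻¹ + c * y⁻¹ = 0 then (Fintype.card F : R) else 0) =
        Fintype.card F * ψ (x * (1 - c)) := by
    rw [sum_eq_single (-(c * x))]
    · rw [if_pos ((inv_add_mul_inv_eq_zero_iff c hx (by simp [hc, hx])).2 rfl), mul_comm,
        show x + -(c * x) = x * (1 - c) by ring]
    · intro y hy hne
      rw [if_neg (mt (inv_add_mul_inv_eq_zero_iff c hx (by simpa using hy)).1 hne), mul_zero]
    · intro h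
      exact absurd (by simp [hc, hx]) h
  have hconst : ∑ y ∈ univ \ {0}, ψ (x + y) = -ψ x := by
    simp_rw [map_add_eq_mul, ← mul_sum, sum_nonzero_eq_neg_one hψ, mul_neg_one]
  rw [sum_congr rfl fun y _ => mul_sub_one (ψ (x + y)) _, sum_sub_distrib, hline, hconst,
    sub_neg_eq_add]

theorem sum_kloostermanSum_mul (hψ : ψ.IsPrimitive) {c : F} (hc0 : c ≠ 0) (hc1 : c ≠ 1) :
    ∑ u ∈ univ \ {0}, kloostermanSum ψ u * kloostermanSum ψ (c * u) =
      -(Fintype.card F : R) - 1 := by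
  have h1c : 1 - c ≠ 0 := sub_ne_zero.2 hc1.symm
  rw [sum_kloostermanSum_mul_eq hψ,
    sum_congr rfl fun x hx => sum_nonzero_add_mul_ite_sub_one hψ hc0 (by simpa using hx),
    sum_add_distrib, ← mul_sum, sum_nonzero_mulShift hψ, if_neg h1c, sum_nonzero_eq_neg_one hψ]
  ring

end AddChar

lemma kloosterman_eq_kloostermanSum (p : ℕ) [Fact p.Prime] (u : ZMod p) :
    kloosterman p u = AddChar.kloostermanSum ZMod.stdAddChar u := by
  refine sum_congr rfl fun x _ => ?_
  conv_rhs => rw [← ZMod.natCast_zmod_val (x + u * x⁻¹), ← Int.cast_natCast, ZMod.stdAddChar_coe]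
  push_cast
  rfl

theorem sum_kloosterman_mul_general (p : ℕ) [Fact p.Prime] (c : ZMod p)
    (hc0 : c ≠ 0) (hc1 : c ≠ 1) :
    ∑ u ∈ (Finset.univ \ {0} : Finset (ZMod p)), kloosterman p u * kloosterman p (c * u) =
      -(p : ℂ) - 1 := by
  simp_rw [kloosterman_eq_kloostermanSum]
  rw [AddChar.sum_kloostermanSum_mul (ZMod.isPrimitive_stdAddChar p) hc0 hc1, ZMod.card]

theorem sum_kloosterman_mul (p : ℕ) [Fact p.Prime] (hp : 2 < p) (c : ZMod p)
    (hc0 : c ≠ 0) (hc1 : c ≠ 1) :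
    ∑ u ∈ (Finset.univ \ {0} : Finset (ZMod p)), kloosterman p u * kloosterman p (c * u) =
      -(p : ℂ) - 1 :=
  sum_kloosterman_mul_general p c hc0 hc1
end

section
/- Let A be an n×n left-circulant matrix with first row (a_0, a_1, ..., a_{n-1}) over the complex numbers. Then det A = (-1)^{(n-1)(n-2)/2} · Π_{l=0}^{n-1} f(θ_l), where f(x) = Σ_{r=0}^{n-1} a_r x^r and θ_0, ..., θ_{n-1} are the n-th roots of unity. -/
/-!
Writing `v x = a x` on `Fin n`, the matrix is the circulant `C i j = v (i - j)` with its columns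
permuted by `j ↦ -j`. That permutation fixes `0` and reverses `1, …, n - 1`, so its sign is
`(-1) ^ ((n - 1) * (n - 2) / 2)`. Each character `x ↦ θ ^ x` of `Fin n`, `θ` an `n`-th root of
unity, is an eigenvector of `Cᵀ` with eigenvalue `f θ`; these eigenvectors are the rows of a
Vandermonde matrix in distinct `θ`s, which is invertible, so `det C = ∏ f θ`.
-/

open Matrix Finset

namespace Fin

variable {n : ℕ} [NeZero n] {M : Type*} [CommMonoid M]

def powAddChar {ζ : M} (hζ : ζ ^ n = 1) : AddChar (Fin n) M where
  toFun x := ζ ^ (x : ℕ)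
  map_zero_eq_one' := pow_zero ζ
  map_add_eq_mul' x y := by rw [Fin.val_add, ← pow_eq_pow_mod _ hζ, pow_add]

theorem neg_lt_neg_iff_eq_zero {i j : Fin n} (hij : i < j) : -i < -j ↔ i = 0 := by
  have hj : j ≠ 0 := (Fin.zero_le i).trans_lt hij |>.ne'
  rw [Fin.lt_def, Fin.val_neg, Fin.val_neg, if_neg hj]
  rw [Fin.lt_def] at hij
  have hj0 := Fin.val_ne_zero_iff.mpr hj
  split_ifs with hi
  · simp only [hi, iff_true]
    omega
  · simp only [hi, iff_false, not_lt]
    omega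

theorem sign_neg : Equiv.Perm.sign (Equiv.neg (Fin n)) = (-1) ^ ((n - 1) * (n - 2) / 2) := by
  have inversions_below : ∀ j : Fin n,
      ∏ i ∈ Iio j, (if -i < -j then (1 : ℤˣ) else -1) = (-1) ^ ((j : ℕ) - 1) := by
    intro j
    rcases eq_or_ne j 0 with rfl | hj
    · simp
    have h0j : (0 : Fin n) ∈ Iio j := mem_Iio.mpr (Fin.pos_iff_ne_zero.mpr hj)
    rw [← mul_prod_erase _ _ h0j, if_pos ((neg_lt_neg_iff_eq_zero (mem_Iio.mp h0j)).mpr rfl),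
      one_mul, prod_congr rfl fun i hi => if_neg ?_, Finset.prod_const, card_erase_of_mem h0j,
      Fin.card_Iio]
    obtain ⟨hi0, hij⟩ := mem_erase.mp hi
    exact fun h => hi0 ((neg_lt_neg_iff_eq_zero (mem_Iio.mp hij)).mp h)
  rw [Equiv.Perm.sign_eq_prod_prod_Iio]
  simp only [Equiv.neg_apply, inversions_below]
  rw [Fin.prod_univ_eq_prod_range (fun j => ((-1 : ℤˣ) ^ (j - 1))) n, prod_pow_eq_pow_sum]
  obtain ⟨m, rfl⟩ := Nat.exists_eq_succ_of_ne_zero (NeZero.ne n)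
  simp [sum_range_succ', sum_range_id]

end Fin

namespace Matrix

variable {ι R : Type*} [Fintype ι]

theorem transpose_circulant_mulVec_addChar [AddCommGroup ι] [CommSemiring R] (v : ι → R)
    (ψ : AddChar ι R) : (circulant v)ᵀ *ᵥ ⇑ψ = (∑ r, v r * ψ r) • ⇑ψ := by
  ext k
  simp only [mulVec, dotProduct, transpose_apply, circulant_apply, Pi.smul_apply, smul_eq_mul,
    sum_mul, mul_assoc]
  exact Fintype.sum_equiv (Equiv.subRight k) _ _ fun j => by
    rw [Equiv.subRight_apply, ← AddChar.map_add_eq_mul, sub_add_cancel]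

theorem det_eq_prod_of_mulVec_row_eq_smul [DecidableEq ι] [CommRing R] [IsDomain R]
    {M V : Matrix ι ι R} {d : ι → R} (hV : V.det ≠ 0) (h : ∀ l, M *ᵥ V l = d l • V l) :
    M.det = ∏ l, d l := by
  have hMV : M * Vᵀ = Vᵀ * diagonal d := by
    ext x l
    rw [mul_diagonal, transpose_apply, mul_apply]
    simpa [mulVec, dotProduct, mul_comm] using congrFun (h l) x
  have := congrArg det hMV
  rw [det_mul, det_mul, det_transpose, det_diagonal, mul_comm V.det] at this
  exact mul_right_cancel₀ hV this

theorem det_circulant_fin [CommRing R] [IsDomain R] {n : ℕ} [NeZero n] {ζ : R}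
    (hζ : IsPrimitiveRoot ζ n) (v : Fin n → R) :
    (circulant v).det = ∏ l : Fin n, ∑ r : Fin n, v r * (ζ ^ (l : ℕ)) ^ (r : ℕ) := by
  rw [← det_transpose]
  refine det_eq_prod_of_mulVec_row_eq_smul (V := vandermonde fun l : Fin n => ζ ^ (l : ℕ))
    ?_ fun l => ?_
  · exact det_vandermonde_ne_zero_iff.mpr fun i j hij => Fin.ext (hζ.pow_inj i.isLt j.isLt hij)
  · have hl : (ζ ^ (l : ℕ)) ^ n = 1 := by rw [← pow_mul, mul_comm, pow_mul, hζ.pow_eq_one, one_pow]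
    exact transpose_circulant_mulVec_addChar v (Fin.powAddChar hl)

end Matrix

theorem det_leftCirculant (n : ℕ) (a : ℕ → ℂ)
    (A : Matrix (Fin n) (Fin n) ℂ) (hA : ∀ i j : Fin n, A i j = a ((i.val + j.val) % n)) :
    A.det = (-1 : ℂ) ^ ((n - 1) * (n - 2) / 2) *
      ∏ l ∈ Finset.range n, ∑ r ∈ Finset.range n,
        a r * Complex.exp (2 * Real.pi * Complex.I * l / n) ^ r := by
  rcases eq_or_ne n 0 with rfl | hn
  · simp
  have : NeZero n := ⟨hn⟩
  have hA' : A = (circulant fun x : Fin n => a x).submatrix id (Equiv.neg (Fin n)) := by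
    ext i j
    simp [hA, circulant_apply, Fin.val_add]
  have hθ : ∀ l : ℕ, Complex.exp (2 * Real.pi * Complex.I * l / n) =
      Complex.exp (2 * Real.pi * Complex.I / n) ^ l := fun l => by
    rw [← Complex.exp_nat_mul]; ring_nf
  simp only [hθ]
  rw [hA', det_permute', Fin.sign_neg, det_circulant_fin (Complex.isPrimitiveRoot_exp n hn),
    ← Fin.prod_univ_eq_prod_range]
  simp only [← Fin.sum_univ_eq_sum_range (fun r => a r * _)]
  push_cast
  rfl
end

section
/- Let p be a prime, g a primitive root mod p, K the left-circulant (p-1)×(p-1) matrix with entries k_{s+l} = K(g^{s+l}) + p + 1 (subscripts mod p-1), and K' the left-circulant matrix with entries K(g^{s+l}). Then det K = p^2 · det K'. -/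
/-!
Every column of the matrix `K'` sums to `∑_{u ≠ 0} K(u) = 1`, because `s ↦ g^(s+l)` runs over
`𝔽_p^×`; the latter sum is `1` since each `x ≠ 0` contributes `ψ(x) · ∑_{u ≠ 0} ψ(u/x) = -ψ(x)`
for the standard additive character `ψ`. Column sums `1` mean `J K' = J` for the all-ones matrix
`J`, so `K = K' + (p+1) J = (1 + (p+1) J) K'`, and `det (1 + (p+1) J) = 1 + (p-1)(p+1) = p²`.
-/

open Finset

namespace Matrix

variable {n R : Type*} [Fintype n] [DecidableEq n] [CommRing R]

theorem det_add_const_of_forall_sum_col_eq_one {A : Matrix n n R} (hA : ∀ j, ∑ i, A i j = 1)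
    (c : R) : (A + of fun _ _ => c).det = (1 + Fintype.card n * c) * A.det := by
  have hfactor : A + of (fun _ _ => c) =
      ((1 : Matrix n n R) + replicateCol Unit (fun _ : n => c) *
        replicateRow Unit (fun _ : n => (1 : R))) * A := by
    rw [add_mul, Matrix.one_mul]
    congr 1
    ext i j
    simp [mul_apply, ← Finset.mul_sum, hA]
  rw [hfactor, det_mul, det_one_add_replicateCol_mul_replicateRow]
  simp [dotProduct]

end Matrix

theorem AddChar.sum_sdiff_zero_mulShift {R R' : Type*} [CommRing R] [Fintype R] [DecidableEq R]
    [CommRing R'] [IsDomain R'] {ψ : AddChar R R'} (hψ : ψ.IsPrimitive) {b : R} (hb : b ≠ 0) :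
    ∑ x ∈ univ \ {0}, ψ (x * b) = -1 := by
  rw [sum_sdiff_eq_sub (subset_univ _), sum_mulShift b hψ, if_neg hb]
  simp

theorem sum_units_val_eq_sum_sdiff_zero {K M : Type*} [GroupWithZero K] [Fintype K]
    [DecidableEq K] [AddCommMonoid M] (f : K → M) : ∑ u : Kˣ, f u = ∑ x ∈ univ \ {0}, f x := by
  refine sum_nbij Units.val (fun u _ => by simp) (fun _ _ _ _ h => Units.val_injective h) ?_
    (fun _ _ => rfl)
  intro x hx
  have hx0 : x ≠ 0 := by simpa using hx
  exact ⟨Units.mk0 x hx0, by simp, rfl⟩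

theorem sum_pow_eq_sum_of_orderOf_eq_card {G M : Type*} [Group G] [Fintype G] [AddCommMonoid M]
    {g : G} {n : ℕ} (hg : orderOf g = n) (hn : Fintype.card G = n) (f : G → M) :
    ∑ k : Fin n, f (g ^ (k : ℕ)) = ∑ x, f x := by
  subst hg
  refine Fintype.sum_bijective _ ?_ _ _ fun _ => rfl
  refine (Fintype.bijective_iff_injective_and_card _).mpr ⟨fun k l hkl => ?_, by simp [hn]⟩
  exact Fin.ext (pow_injOn_Iio_orderOf k.isLt l.isLt hkl)

variable (p : ℕ) [Fact p.Prime]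

theorem kloosterman_eq_sum_stdAddChar (u : ZMod p) :
    kloosterman p u = ∑ x ∈ univ \ {0}, ZMod.stdAddChar x * ZMod.stdAddChar (u * x⁻¹) := by
  simp_rw [← AddChar.map_add_eq_mul, ZMod.stdAddChar_apply, ZMod.toCircle_apply]
  rfl

theorem sum_kloosterman : ∑ u ∈ univ \ {0}, kloosterman p u = 1 := by
  have hψ := ZMod.isPrimitive_stdAddChar p
  have inner : ∀ x ∈ (univ \ {0} : Finset (ZMod p)),
      ∑ u ∈ univ \ {0}, ZMod.stdAddChar x * ZMod.stdAddChar (u * x⁻¹) = -ZMod.stdAddChar x := by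
    intro x hx
    rw [← mul_sum, AddChar.sum_sdiff_zero_mulShift hψ (inv_ne_zero (by simpa using hx))]
    ring
  simp_rw [kloosterman_eq_sum_stdAddChar]
  rw [sum_comm, sum_congr rfl inner, sum_neg_distrib]
  rw [neg_eq_iff_eq_neg]
  simpa using AddChar.sum_sdiff_zero_mulShift hψ one_ne_zero

theorem sum_kloosterman_pow_shift {g : (ZMod p)ˣ} (hg : orderOf g = p - 1) (l : Fin (p - 1)) :
    ∑ s : Fin (p - 1), kloosterman p ((g : ZMod p) ^ ((s.val + l.val) % (p - 1))) = 1 := by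
  have : NeZero (p - 1) := ⟨(Nat.sub_pos_of_lt (Fact.out : p.Prime).one_lt).ne'⟩
  simp_rw [← Fin.val_add, ← Units.val_pow_eq_pow_val]
  rw [Fintype.sum_equiv (Equiv.addRight l)
      (fun s => kloosterman p ((g ^ (s + l).val : (ZMod p)ˣ) : ZMod p))
      (fun s => kloosterman p ((g ^ s.val : (ZMod p)ˣ) : ZMod p)) (fun _ => rfl),
    sum_pow_eq_sum_of_orderOf_eq_card hg (ZMod.card_units p) (fun u => kloosterman p u),
    sum_units_val_eq_sum_sdiff_zero (kloosterman p), sum_kloosterman]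

theorem det_shifted_kloosterman_circulant (p : ℕ) [Fact p.Prime] (g : (ZMod p)ˣ)
    (hg : orderOf g = p - 1) :
    Matrix.det (Matrix.of fun s l : Fin (p - 1) =>
        kloosterman p ((g : ZMod p) ^ ((s.val + l.val) % (p - 1))) + p + 1) =
      (p : ℂ) ^ 2 * Matrix.det (Matrix.of fun s l : Fin (p - 1) =>
        kloosterman p ((g : ZMod p) ^ ((s.val + l.val) % (p - 1)))) := by
  set A : Matrix (Fin (p - 1)) (Fin (p - 1)) ℂ := Matrix.of fun s l =>
    kloosterman p ((g : ZMod p) ^ ((s.val + l.val) % (p - 1)))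
  have hK : (Matrix.of fun s l : Fin (p - 1) =>
      kloosterman p ((g : ZMod p) ^ ((s.val + l.val) % (p - 1))) + p + 1) =
      A + Matrix.of fun _ _ => (p + 1 : ℂ) := by
    ext; simp [A, add_assoc]
  have hp : 1 ≤ p := (Fact.out : p.Prime).one_le
  rw [hK, Matrix.det_add_const_of_forall_sum_col_eq_one (A := A)
    (sum_kloosterman_pow_shift p hg), Fintype.card_fin, Nat.cast_sub hp]
  push_cast
  ring
end

section
/- Let p be a prime and g a primitive root mod p. The (p-1)×(p-1) left-circulant matrix K with first row (K(1)+p+1, K(g)+p+1, ..., K(g^{p-2})+p+1) satisfies |det K| = p^p; in particular K is invertible. -/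
/-!
Indexed by `ZMod (p - 1)`, the matrix is left circulant, `K s l = f (s + l)`, so the Fourier
matrix `F = (e(jk/(p-1)))` diagonalises it: `F K F = (p - 1) • diag λ` with
`λ k = ∑ t, f t e(tk/(p-1))`, and `F Fᴴ = (p - 1) • 1` gives `|det K| = ∏ |λ k|`.
If `χ_k` is the character of `F_pˣ` with `χ_k g = e(k/(p-1))`, then substituting `u = x y` gives
`∑ u, χ u K(u) = G(χ)²` for the Gauss sum `G(χ)`, so `λ k = G(χ_k)² + (p + 1)(p - 1)[k = 0]`.
Thus `λ 0 = (-1)² + p² - 1 = p²` and `|λ k| = |G(χ_k)|² = p` for `k ≠ 0`,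
so `|det K| = p² · p^(p-2)`.
-/

open Finset Matrix

namespace ZMod
variable {N : ℕ} [NeZero N]

lemma sum_stdAddChar_mul (b : ZMod N) :
    ∑ x : ZMod N, stdAddChar (x * b) = if b = 0 then (N : ℂ) else 0 := by
  rw [AddChar.sum_mulShift b (isPrimitive_stdAddChar N), card, Nat.cast_ite, Nat.cast_zero]

lemma val_finEquiv (s : Fin N) : (finEquiv N s).val = s.val := by
  obtain ⟨n, rfl⟩ := Nat.exists_eq_succ_of_ne_zero (NeZero.ne N)
  rfl

variable (N) in
noncomputable def dftMatrix : Matrix (ZMod N) (ZMod N) ℂ :=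
  of fun j k => stdAddChar (j * k)

lemma dftMatrix_mul_conjTranspose : dftMatrix N * (dftMatrix N)ᴴ = (N : ℂ) • 1 := by
  ext j k
  simp only [mul_apply, conjTranspose_apply, dftMatrix, of_apply, RCLike.star_def,
    ← AddChar.map_neg_eq_conj, ← AddChar.map_add_eq_mul, Matrix.smul_apply, one_apply]
  simp_rw [show ∀ s, j * s + -(k * s) = s * (j - k) from fun s => by ring]
  simp only [sum_stdAddChar_mul, sub_eq_zero]
  split_ifs <;> simp

lemma norm_det_dftMatrix_sq : ‖(dftMatrix N).det‖ ^ 2 = (N : ℝ) ^ N := by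
  have h := congrArg det (dftMatrix_mul_conjTranspose (N := N))
  rw [det_mul, det_conjTranspose, det_smul, det_one, mul_one, card, RCLike.star_def,
    Complex.mul_conj, Complex.normSq_eq_norm_sq] at h
  exact_mod_cast h

lemma dftMatrix_mul_leftCirculant_mul_dftMatrix (f : ZMod N → ℂ) :
    dftMatrix N * of (fun s l => f (s + l)) * dftMatrix N =
      (N : ℂ) • diagonal fun k => ∑ t, f t * stdAddChar (t * k) := by
  ext k k'
  simp only [mul_apply, dftMatrix, of_apply, Matrix.smul_apply, diagonal_apply, smul_eq_mul]
  calc ∑ l, (∑ s, stdAddChar (k * s) * f (s + l)) * stdAddChar (l * k')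
      = ∑ l, ∑ t, f t * stdAddChar (t * k) * stdAddChar (l * (k' - k)) := by
        refine sum_congr rfl fun l _ => ?_
        rw [sum_mul, ← (Equiv.subRight l).sum_comp]
        refine sum_congr rfl fun t _ => ?_
        rw [Equiv.subRight_apply, sub_add_cancel, mul_right_comm, ← AddChar.map_add_eq_mul,
          show k * (t - l) + l * k' = t * k + l * (k' - k) by ring, AddChar.map_add_eq_mul]
        ring
    _ = (∑ t, f t * stdAddChar (t * k)) * ∑ l, stdAddChar (l * (k' - k)) := by
        rw [sum_comm, sum_mul_sum]
    _ = _ := by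
        simp only [sum_stdAddChar_mul, sub_eq_zero, eq_comm (a := k')]
        split_ifs <;> ring

theorem norm_det_leftCirculant (f : ZMod N → ℂ) :
    ‖(of fun s l : ZMod N => f (s + l)).det‖ = ∏ k, ‖∑ t, f t * stdAddChar (t * k)‖ := by
  have h := congrArg (‖det ·‖) (dftMatrix_mul_leftCirculant_mul_dftMatrix f)
  simp only [det_mul, det_smul, det_diagonal, norm_mul, norm_pow, norm_prod, card,
    Complex.norm_natCast] at h
  rw [mul_right_comm, ← sq, norm_det_dftMatrix_sq] at h
  have hpos : (0 : ℝ) < (N : ℝ) ^ N := by have := NeZero.pos N; positivity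
  exact mul_left_cancel₀ hpos.ne' h

end ZMod

lemma Finset.sum_sdiff_zero_eq_sum_units {G₀ β : Type*} [GroupWithZero G₀] [Fintype G₀]
    [DecidableEq G₀] [AddCommMonoid β] (f : G₀ → β) :
    ∑ x ∈ univ \ {0}, f x = ∑ u : G₀ˣ, f u :=
  (sum_subtype _ (by simp) f).trans (Fintype.sum_equiv unitsEquivNeZero.symm _ _ fun _ => rfl)

section FiniteField
variable {F : Type*} [Field F] [Fintype F]

lemma norm_gaussSum_sq {χ : MulChar F ℂ} (hχ : χ ≠ 1) {ψ : AddChar F ℂ} (hψ : ψ.IsPrimitive) :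
    ‖gaussSum χ ψ‖ ^ 2 = Fintype.card F := by
  have h := gaussSum_mul_gaussSum_eq_card hχ hψ
  rw [← star_gaussSum_eq, RCLike.star_def, Complex.mul_conj, Complex.normSq_eq_norm_sq] at h
  exact_mod_cast h

variable [DecidableEq F]

lemma MulChar.sum_mul_eq_sum_units {R : Type*} [CommRing R] (χ : MulChar F R) (h : F → R) :
    ∑ a, χ a * h a = ∑ u : Fˣ, χ u * h u := by
  rw [← sum_sdiff_zero_eq_sum_units (fun a => χ a * h a),
    sum_eq_add_sum_sdiff_singleton_of_mem (mem_univ 0), MulChar.map_zero, zero_mul, zero_add]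

lemma sum_mulChar_mul_kloosterman {R : Type*} [CommRing R] (χ : MulChar F R) (ψ : AddChar F R) :
    ∑ u : Fˣ, χ u * ∑ x : Fˣ, ψ (x + u * (x : F)⁻¹) = gaussSum χ ψ ^ 2 := by
  rw [gaussSum, χ.sum_mul_eq_sum_units, sq, sum_mul_sum]
  simp only [mul_sum]
  rw [sum_comm]
  refine sum_congr rfl fun x _ => ?_
  rw [← Equiv.sum_comp (Equiv.mulLeft x)]
  refine sum_congr rfl fun y _ => ?_
  simp only [Equiv.coe_mulLeft, Units.val_mul, map_mul, AddChar.map_add_eq_mul]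
  rw [mul_comm (x : F), mul_inv_cancel_right₀ x.ne_zero]
  ring

end FiniteField

section Generator
variable {M : Type*} [CommMonoid M] {g : Mˣ} (hg : ∀ x, x ∈ Subgroup.zpowers g) {N : ℕ}
  [NeZero N] (hN : Nat.card Mˣ = N)
include hg hN

lemma zmodMulEquivOfGenerator_apply_ofAdd (t : ZMod N) :
    zmodMulEquivOfGenerator hg hN (.ofAdd t) = g ^ t.val := by
  have h := zmodMulEquivOfGenerator_apply_ofAdd_intCast hg hN t.val
  rwa [Int.cast_natCast, ZMod.natCast_zmod_val, zpow_natCast] at h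

lemma sum_zmod_pow_val_eq_sum_units [Fintype Mˣ] {β : Type*} [AddCommMonoid β] (f : Mˣ → β) :
    ∑ t : ZMod N, f (g ^ t.val) = ∑ u, f u :=
  Fintype.sum_equiv (Multiplicative.ofAdd.trans (zmodMulEquivOfGenerator hg hN).toEquiv) _ _
    fun t => congrArg f (zmodMulEquivOfGenerator_apply_ofAdd hg hN t).symm

/-- The character sending the generator `g` to `e(k/N)`. -/
noncomputable def MulChar.ofGenerator (k : ZMod N) : MulChar M ℂ :=
  ofUnitHom <| (ZMod.stdAddChar.mulShift k).toMonoidHom.toHomUnits.comp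
    (zmodMulEquivOfGenerator hg hN).symm.toMonoidHom

lemma MulChar.ofGenerator_apply_pow_val (k t : ZMod N) :
    ofGenerator hg hN k ↑(g ^ t.val) = ZMod.stdAddChar (t * k) := by
  rw [ofGenerator, ofUnitHom_coe, ← zmodMulEquivOfGenerator_apply_ofAdd hg hN]
  simp [mul_comm]

lemma MulChar.ofGenerator_eq_one_iff {k : ZMod N} : ofGenerator hg hN k = 1 ↔ k = 0 := by
  rw [eq_iff hg, one_apply_coe]
  simpa [ofGenerator] using ZMod.injective_stdAddChar.eq_iff' (AddChar.map_zero_eq_one _)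

end Generator

section Kloosterman
variable {p : ℕ} [Fact p.Prime]

lemma ZMod.natCard_units (p : ℕ) [Fact p.Prime] : Nat.card (ZMod p)ˣ = p - 1 := by
  rw [Nat.card_eq_fintype_card, ZMod.card_units]

lemma kloosterman_eq_sum_units (u : ZMod p) :
    kloosterman p u = ∑ x : (ZMod p)ˣ, ZMod.stdAddChar ((x : ZMod p) + u * (x : ZMod p)⁻¹) := by
  rw [kloosterman, sum_sdiff_zero_eq_sum_units
    (fun x : ZMod p => Complex.exp (2 * Real.pi * Complex.I * ((x + u * x⁻¹).val : ℂ) / p))]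
  simp only [ZMod.stdAddChar_apply, ZMod.toCircle_apply]

variable [NeZero (p - 1)]

noncomputable def kloostermanEigenvalue (g : (ZMod p)ˣ) (k : ZMod (p - 1)) : ℂ :=
  ∑ t : ZMod (p - 1), (kloosterman p ↑(g ^ t.val) + p + 1) * ZMod.stdAddChar (t * k)

variable {g : (ZMod p)ˣ} (hg : ∀ x, x ∈ Subgroup.zpowers g)
include hg

lemma kloostermanEigenvalue_eq (k : ZMod (p - 1)) :
    kloostermanEigenvalue g k =
      gaussSum (MulChar.ofGenerator hg (ZMod.natCard_units p) k) ZMod.stdAddChar ^ 2 +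
        (p + 1) * if k = 0 then ((p - 1 : ℕ) : ℂ) else 0 := by
  rw [← sum_mulChar_mul_kloosterman, ← sum_zmod_pow_val_eq_sum_units hg (ZMod.natCard_units p),
    ← ZMod.sum_stdAddChar_mul, mul_sum, ← sum_add_distrib, kloostermanEigenvalue]
  refine sum_congr rfl fun t _ => ?_
  rw [MulChar.ofGenerator_apply_pow_val, kloosterman_eq_sum_units]
  ring

lemma norm_kloostermanEigenvalue_zero : ‖kloostermanEigenvalue g 0‖ = (p : ℝ) ^ 2 := by
  have hψ : (ZMod.stdAddChar : AddChar (ZMod p) ℂ) ≠ 1 := fun h => one_ne_zero <|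
    ZMod.injective_stdAddChar (by rw [h, AddChar.one_apply, AddChar.map_zero_eq_one])
  rw [kloostermanEigenvalue_eq hg, if_pos rfl, (MulChar.ofGenerator_eq_one_iff hg _).mpr rfl,
    gaussSum_one_left hψ, Nat.cast_sub (Fact.out : p.Prime).one_le, Nat.cast_one,
    show ∀ q : ℂ, (-1) ^ 2 + (q + 1) * (q - 1) = q ^ 2 from fun q => by ring, norm_pow,
    Complex.norm_natCast]

lemma norm_kloostermanEigenvalue_of_ne_zero {k : ZMod (p - 1)} (hk : k ≠ 0) :
    ‖kloostermanEigenvalue g k‖ = p := by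
  rw [kloostermanEigenvalue_eq hg, if_neg hk, mul_zero, add_zero, norm_pow,
    norm_gaussSum_sq ((MulChar.ofGenerator_eq_one_iff hg _).not.mpr hk)
      (ZMod.isPrimitive_stdAddChar p), ZMod.card]

lemma prod_norm_kloostermanEigenvalue : ∏ k, ‖kloostermanEigenvalue g k‖ = (p : ℝ) ^ p := by
  rw [← mul_prod_erase univ _ (mem_univ 0), norm_kloostermanEigenvalue_zero hg,
    prod_congr rfl fun k hk => norm_kloostermanEigenvalue_of_ne_zero hg (ne_of_mem_erase hk),
    prod_const, card_erase_of_mem (mem_univ _), card_univ, ZMod.card, ← pow_add]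
  have := (Fact.out : p.Prime).two_le
  congr 1
  omega

end Kloosterman

theorem abs_det_shifted_kloosterman_circulant (p : ℕ) [Fact p.Prime] (g : (ZMod p)ˣ)
    (hg : orderOf g = p - 1) :
    ‖Matrix.det (Matrix.of fun s l : Fin (p - 1) =>
        kloosterman p ((g : ZMod p) ^ ((s.val + l.val) % (p - 1))) + p + 1)‖ = (p : ℝ) ^ p ∧
    IsUnit (Matrix.of fun s l : Fin (p - 1) =>
        kloosterman p ((g : ZMod p) ^ ((s.val + l.val) % (p - 1))) + p + 1) := by
  have : NeZero (p - 1) := ⟨(Nat.sub_pos_of_lt (Fact.out : p.Prime).one_lt).ne'⟩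
  have hgen : ∀ x, x ∈ Subgroup.zpowers g := (Subgroup.eq_top_iff' _).mp <|
    Subgroup.eq_top_of_card_eq _ (by rw [Nat.card_zpowers, hg, ZMod.natCard_units])
  have hK : (Matrix.of fun s l : Fin (p - 1) =>
        kloosterman p ((g : ZMod p) ^ ((s.val + l.val) % (p - 1))) + p + 1) =
      (Matrix.of fun a b : ZMod (p - 1) => kloosterman p ↑(g ^ (a + b).val) + p + 1).submatrix
        (ZMod.finEquiv (p - 1)).toEquiv (ZMod.finEquiv (p - 1)).toEquiv := by
    ext s l
    simp [← map_add, ZMod.val_finEquiv, Fin.val_add]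
  have hdet : ‖(Matrix.of fun s l : Fin (p - 1) =>
      kloosterman p ((g : ZMod p) ^ ((s.val + l.val) % (p - 1))) + p + 1).det‖ = (p : ℝ) ^ p := by
    rw [hK, det_submatrix_equiv_self,
      ZMod.norm_det_leftCirculant fun t => kloosterman p ↑(g ^ t.val) + p + 1]
    exact prod_norm_kloostermanEigenvalue hgen
  refine ⟨hdet, ?_⟩
  rw [isUnit_iff_isUnit_det, isUnit_iff_ne_zero, ← norm_ne_zero_iff, hdet]
  exact pow_ne_zero _ (Nat.cast_ne_zero.mpr (Fact.out : p.Prime).ne_zero)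
end

section
/- For each nonzero u in F_p, the Kloosterman sum over F_q satisfies K^{(m)}(u) = T_{00} - 2·T_{01} + Σ_{s=1}^{p-1} K(us)·T_{1s}, where K is the Kloosterman sum over F_p; equivalently, Σ_{s=1}^{p-1} (K(us) + p + 1)·T_{1s} = K^{(m)}(u) + q + 1. -/
/-!
Grouping the terms of `K^{(m)}(u) = ∑_{x ≠ 0} ψ(tr x + u tr x⁻¹)` according to the pair
`(tr x, tr x⁻¹) = (i, j)` writes it as `∑_{i,j} T_{ij} ψ(i + u j)`. Scaling `x ↦ c x` shows
`T_{ci, c⁻¹j} = T_{ij}`, so for `i ≠ 0` the row `i` is a reindexed copy of the row `1`; summing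
these rows over `i` produces the Kloosterman sums `K(us)` over `F_p`, while the row `i = 0` is
constant off `j = 0` and contributes the character sum `∑_{j ≠ 0} ψ(u j) = -1`.
The second identity follows from the first and the row sums of `T`, since the trace takes each
value of `F_p` exactly `q / p` times.
-/

open Finset

/-- The Kloosterman sum over the extension field `F = F_q`, `q = p^m`, at `u ∈ F_p`. -/
noncomputable def kloostermanExt (p : ℕ) [Fact p.Prime] (F : Type*) [Field F] [Fintype F]
    [DecidableEq F] [Algebra (ZMod p) F] (u : ZMod p) : ℂ :=
  ∑ x ∈ (Finset.univ \ {0} : Finset F),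
    Complex.exp (2 * Real.pi * Complex.I *
      ((Algebra.trace (ZMod p) F (x + algebraMap (ZMod p) F u * x⁻¹)).val : ℂ) / p)

section TraceFiber

variable {K L : Type*} [Field K] [DecidableEq K] [Field L] [Fintype L] [Algebra K L]
  [Algebra.IsSeparable K L]

theorem card_filter_trace_eq (c c' : K) :
    #{x : L | Algebra.trace K L x = c} = #{x : L | Algebra.trace K L x = c'} :=
  have hsurj := Algebra.trace_surjective K L
  AddMonoidHom.card_fiber_eq_of_mem_range (Algebra.trace K L).toAddMonoidHom (hsurj c) (hsurj c')

variable [Fintype K]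

theorem card_mul_card_filter_trace_eq (c : K) :
    Fintype.card K * #{x : L | Algebra.trace K L x = c} = Fintype.card L := by
  have hfibers : Fintype.card L = ∑ c' : K, #{x : L | Algebra.trace K L x = c'} := by
    rw [← card_univ, card_eq_sum_card_fiberwise (f := Algebra.trace K L) fun _ _ ↦ mem_univ _]
  rw [hfibers, sum_const_nat fun c' _ ↦ card_filter_trace_eq c' c, card_univ]

end TraceFiber

section TraceInvCount

variable (K L : Type*) [Field K] [DecidableEq K] [Field L] [Fintype L] [DecidableEq L]
  [Algebra K L]

/-- The paper's `T_{ij}`. -/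
noncomputable def traceInvCount (i j : K) : ℕ :=
  #{x : L | x ≠ 0 ∧ Algebra.trace K L x = i ∧ Algebra.trace K L x⁻¹ = j}

variable {K L}

theorem traceInvCount_comm (i j : K) : traceInvCount K L i j = traceInvCount K L j i := by
  refine card_nbij' (·⁻¹) (·⁻¹) ?_ ?_ (fun x _ ↦ inv_inv x) (fun x _ ↦ inv_inv x) <;>
  · intro x
    simp only [coe_filter, mem_univ, true_and, Set.mem_ofPred_eq, inv_inv, ne_eq, inv_eq_zero]
    exact fun ⟨hx, hi, hj⟩ ↦ ⟨hx, hj, hi⟩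

theorem traceInvCount_mul_mul_inv {c : K} (hc : c ≠ 0) (i j : K) :
    traceInvCount K L (c * i) (c⁻¹ * j) = traceInvCount K L i j := by
  have hsmul : ∀ {c : K}, c ≠ 0 → ∀ {i j : K} {x : L}, x ≠ 0 ∧ Algebra.trace K L x = i ∧
      Algebra.trace K L x⁻¹ = j → c • x ≠ 0 ∧ Algebra.trace K L (c • x) = c * i ∧
      Algebra.trace K L (c • x)⁻¹ = c⁻¹ * j := by
    rintro c hc i j x ⟨hx, rfl, rfl⟩
    exact ⟨smul_ne_zero hc hx, map_smul .., by rw [smul_inv₀, map_smul, smul_eq_mul]⟩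
  refine card_nbij' (c⁻¹ • ·) (c • ·) ?_ ?_ (fun x _ ↦ smul_inv_smul₀ hc x)
    (fun x _ ↦ inv_smul_smul₀ hc x) <;> intro x <;>
    simp only [coe_filter, mem_univ, true_and, Set.mem_ofPred_eq]
  · simpa [hc] using hsmul (inv_ne_zero hc) (i := c * i) (j := c⁻¹ * j) (x := x)
  · exact hsmul hc

theorem traceInvCount_eq_one_mul {i : K} (hi : i ≠ 0) (j : K) :
    traceInvCount K L i j = traceInvCount K L 1 (i * j) := by
  simpa [hi] using (traceInvCount_mul_mul_inv (L := L) (inv_ne_zero hi) i j).symm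

theorem traceInvCount_zero_left {j : K} (hj : j ≠ 0) :
    traceInvCount K L 0 j = traceInvCount K L 0 1 := by
  simpa [hj] using (traceInvCount_mul_mul_inv (L := L) hj 0 j).symm

theorem traceInvCount_zero_right {i : K} (hi : i ≠ 0) :
    traceInvCount K L i 0 = traceInvCount K L 0 1 := by
  rw [traceInvCount_comm, traceInvCount_zero_left hi]

variable [Fintype K]

theorem sum_traceInvCount_nsmul_of_ne_zero {M : Type*} [AddCommMonoid M] {i : K} (hi : i ≠ 0)
    (f : K → M) :
    ∑ j, traceInvCount K L i j • f j = ∑ s, traceInvCount K L 1 s • f (i⁻¹ * s) := by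
  simp_rw [traceInvCount_eq_one_mul hi]
  calc ∑ j, traceInvCount K L 1 (i * j) • f j
      = ∑ j, traceInvCount K L 1 (i * j) • f (i⁻¹ * (i * j)) := by
        simp only [inv_mul_cancel_left₀ hi]
    _ = ∑ s, traceInvCount K L 1 s • f (i⁻¹ * s) :=
        Equiv.sum_comp (Equiv.mulLeft₀ i hi) fun s ↦ traceInvCount K L 1 s • f (i⁻¹ * s)

theorem sum_trace_trace_inv {M : Type*} [AddCommMonoid M] (g : K → K → M) :
    ∑ x ∈ univ \ {0}, g (Algebra.trace K L x) (Algebra.trace K L x⁻¹) =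
      ∑ i, ∑ j, traceInvCount K L i j • g i j := by
  rw [← sum_fiberwise (univ \ {0}) (fun x ↦ (Algebra.trace K L x, Algebra.trace K L x⁻¹)),
    ← Fintype.sum_prod_type']
  refine sum_congr rfl fun ij _ ↦ ?_
  rw [sum_congr rfl fun x hx ↦ show g _ _ = g ij.1 ij.2 by rw [← (mem_filter.1 hx).2],
    sum_const]
  congr 2
  ext x
  simp [Prod.ext_iff]

theorem sum_traceInvCount (i : K) :
    ∑ j, traceInvCount K L i j = #{x ∈ univ \ {0} | Algebra.trace K L x = i} := by
  have h := sum_trace_trace_inv (L := L) fun i' (_ : K) ↦ if i' = i then 1 else 0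
  simpa [sum_boole] using h.symm

theorem sum_traceInvCount_one :
    ∑ j, traceInvCount K L 1 j = #{x : L | Algebra.trace K L x = 1} := by
  rw [sum_traceInvCount]
  congr 1
  ext x
  simp only [mem_filter, mem_sdiff, mem_univ, mem_singleton, true_and, and_iff_right_iff_imp]
  rintro h rfl
  simp at h

theorem sum_traceInvCount_zero :
    ∑ j, traceInvCount K L 0 j + 1 = #{x : L | Algebra.trace K L x = 0} := by
  rw [sum_traceInvCount, sdiff_singleton_eq_erase, filter_erase, card_erase_add_one]
  simp

theorem card_add_one_mul_sum_traceInvCount_one [Algebra.IsSeparable K L] :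
    (Fintype.card K + 1) * ∑ s ∈ univ \ {0}, traceInvCount K L 1 s + 2 * traceInvCount K L 0 1 =
      traceInvCount K L 0 0 + Fintype.card L + 1 := by
  have hrow1 := sum_traceInvCount_one (K := K) (L := L)
  have hrow0 := sum_traceInvCount_zero (K := K) (L := L)
  rw [sum_eq_add_sum_sdiff_singleton_of_mem (mem_univ 0), traceInvCount_zero_right one_ne_zero,
    card_filter_trace_eq 1 0] at hrow1
  rw [sum_eq_add_sum_sdiff_singleton_of_mem (mem_univ 0),
    sum_const_nat fun j hj ↦ traceInvCount_zero_left (by simpa using hj)] at hrow0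
  have hcard : #(univ \ {(0 : K)}) + 1 = Fintype.card K := by
    rw [sdiff_singleton_eq_erase, card_erase_add_one (mem_univ 0), card_univ]
  rw [← card_mul_card_filter_trace_eq (L := L) (0 : K), ← hcard]
  linear_combination (#(univ \ {(0 : K)}) + 2) * hrow1 - hrow0

end TraceInvCount

section KloostermanSum

variable {K R : Type*} [Field K] [Fintype K] [DecidableEq K] [CommRing R]

def kloostermanSum (ψ : AddChar K R) (v : K) : R :=
  ∑ x ∈ univ \ {0}, ψ (x + v * x⁻¹)

variable [IsDomain R] {ψ : AddChar K R}

theorem sum_sdiff_zero_mul_eq_neg_one (hψ : ψ.IsPrimitive) {v : K} (hv : v ≠ 0) :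
    ∑ a ∈ univ \ {0}, ψ (a * v) = -1 := by
  have h := ψ.sum_mulShift v hψ
  rw [if_neg hv, sum_eq_add_sum_sdiff_singleton_of_mem (mem_univ 0), zero_mul,
    AddChar.map_zero_eq_one] at h
  linear_combination h

theorem kloostermanSum_zero (hψ : ψ.IsPrimitive) : kloostermanSum ψ 0 = -1 := by
  simpa [kloostermanSum] using sum_sdiff_zero_mul_eq_neg_one hψ one_ne_zero

variable {L : Type*} [Field L] [Fintype L] [DecidableEq L] [Algebra K L]

theorem sum_traceInvCount_zero_nsmul (hψ : ψ.IsPrimitive) {u : K} (hu : u ≠ 0) :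
    ∑ j, traceInvCount K L 0 j • ψ (u * j) =
      traceInvCount K L 0 0 - traceInvCount K L 0 1 := by
  rw [sum_eq_add_sum_sdiff_singleton_of_mem (mem_univ 0),
    sum_congr rfl fun j hj ↦ by rw [traceInvCount_zero_left (by simpa using hj)], ← smul_sum]
  simp_rw [mul_comm u]
  rw [sum_sdiff_zero_mul_eq_neg_one hψ hu]
  simp [sub_eq_add_neg]

theorem kloostermanSum_trace (hψ : ψ.IsPrimitive) {u : K} (hu : u ≠ 0) :
    kloostermanSum (ψ.compAddMonoidHom (Algebra.trace K L).toAddMonoidHom) (algebraMap K L u) =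
      traceInvCount K L 0 0 - 2 * traceInvCount K L 0 1 +
        ∑ s ∈ univ \ {0}, kloostermanSum ψ (u * s) * traceInvCount K L 1 s := by
  have hlin (x : L) : Algebra.trace K L (x + algebraMap K L u * x⁻¹) =
      Algebra.trace K L x + u * Algebra.trace K L x⁻¹ := by
    rw [map_add, ← Algebra.smul_def, map_smul, smul_eq_mul]
  have hlhs : kloostermanSum (ψ.compAddMonoidHom (Algebra.trace K L).toAddMonoidHom)
      (algebraMap K L u) = ∑ x ∈ univ \ {0}, ψ (Algebra.trace K L x + u * Algebra.trace K L x⁻¹) :=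
    sum_congr rfl fun x _ ↦ by simp [hlin]
  have hrows : ∑ i ∈ univ \ {0}, ∑ j, traceInvCount K L i j • ψ (i + u * j) =
      ∑ s, traceInvCount K L 1 s • kloostermanSum ψ (u * s) := by
    rw [sum_congr rfl fun i hi ↦ sum_traceInvCount_nsmul_of_ne_zero (by simpa using hi) _, sum_comm]
    simp_rw [kloostermanSum, smul_sum]
    exact sum_congr rfl fun s _ ↦ sum_congr rfl fun i _ ↦ by ring_nf
  rw [hlhs, sum_trace_trace_inv fun i j ↦ ψ (i + u * j),
    sum_eq_add_sum_sdiff_singleton_of_mem (mem_univ 0)]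
  simp only [zero_add]
  rw [sum_traceInvCount_zero_nsmul hψ hu, hrows, sum_eq_add_sum_sdiff_singleton_of_mem (mem_univ 0),
    mul_zero, kloostermanSum_zero hψ, traceInvCount_zero_right one_ne_zero]
  simp only [nsmul_eq_mul, mul_comm]
  ring

end KloostermanSum

section PrimeField

variable {p : ℕ} [Fact p.Prime]

theorem ZMod.sum_sdiff_zero_eq_sum_Icc {n : ℕ} [NeZero n] {M : Type*} [AddCommMonoid M]
    (f : ZMod n → M) : ∑ s ∈ univ \ {0}, f s = ∑ k ∈ Icc 1 (n - 1), f k := by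
  have hn := NeZero.pos n
  refine sum_nbij' ZMod.val (↑) (fun s hs ↦ ?_) (fun k hk ↦ ?_)
    (fun s _ ↦ ZMod.natCast_zmod_val s) (fun k hk ↦ ZMod.val_cast_of_lt ?_)
    (fun s _ ↦ by rw [ZMod.natCast_zmod_val])
  · have := ZMod.val_lt s
    have : s.val ≠ 0 := by simpa [ZMod.val_eq_zero] using hs
    rw [mem_Icc]
    omega
  · rw [mem_Icc] at hk
    simpa [ZMod.natCast_eq_zero_iff] using Nat.not_dvd_of_pos_of_lt (by omega) (by omega)
  · rw [mem_Icc] at hk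
    omega

theorem kloosterman_eq_kloostermanSum_s14 (v : ZMod p) :
    kloosterman p v = kloostermanSum ZMod.stdAddChar v :=
  sum_congr rfl fun x _ ↦ by rw [ZMod.stdAddChar_apply, ZMod.toCircle_apply]

variable {F : Type*} [Field F] [Fintype F] [DecidableEq F] [Algebra (ZMod p) F]

theorem kloostermanExt_eq_kloostermanSum (u : ZMod p) :
    kloostermanExt p F u = kloostermanSum
      (ZMod.stdAddChar.compAddMonoidHom (Algebra.trace (ZMod p) F).toAddMonoidHom)
      (algebraMap (ZMod p) F u) :=
  sum_congr rfl fun x _ ↦ by simp [ZMod.stdAddChar_apply, ZMod.toCircle_apply]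

theorem natCard_eq_traceInvCount (i j : ZMod p) :
    Nat.card {x : F | x ≠ 0 ∧ Algebra.trace (ZMod p) F x = i ∧ Algebra.trace (ZMod p) F x⁻¹ = j} =
      traceInvCount (ZMod p) F i j := by
  rw [traceInvCount, ← Fintype.card_subtype, Nat.card_eq_fintype_card]
  rfl

end PrimeField

theorem kloosterman_linear_system (p m : ℕ) [Fact p.Prime] (F : Type*) [Field F] [Fintype F]
    [DecidableEq F] [Algebra (ZMod p) F] (hq : Fintype.card F = p ^ m)
    (u : ZMod p) (hu : u ≠ 0) :
    (kloostermanExt p F u =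
      (Nat.card {x : F | x ≠ 0 ∧ Algebra.trace (ZMod p) F x = 0 ∧
        Algebra.trace (ZMod p) F x⁻¹ = 0} : ℂ) -
      2 * (Nat.card {x : F | x ≠ 0 ∧ Algebra.trace (ZMod p) F x = 0 ∧
        Algebra.trace (ZMod p) F x⁻¹ = 1} : ℂ) +
      ∑ s ∈ Finset.Icc 1 (p - 1), kloosterman p (u * s) *
        (Nat.card {x : F | x ≠ 0 ∧ Algebra.trace (ZMod p) F x = 1 ∧
          Algebra.trace (ZMod p) F x⁻¹ = (s : ZMod p)} : ℂ)) ∧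
    (∑ s ∈ Finset.Icc 1 (p - 1), (kloosterman p (u * s) + p + 1) *
        (Nat.card {x : F | x ≠ 0 ∧ Algebra.trace (ZMod p) F x = 1 ∧
          Algebra.trace (ZMod p) F x⁻¹ = (s : ZMod p)} : ℂ) =
      kloostermanExt p F u + (p : ℂ) ^ m + 1) := by
  simp only [natCard_eq_traceInvCount]
  have hK : kloostermanExt p F u = traceInvCount (ZMod p) F 0 0 - 2 * traceInvCount (ZMod p) F 0 1 +
      ∑ s ∈ Icc 1 (p - 1), kloosterman p (u * s) * traceInvCount (ZMod p) F 1 s := by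
    rw [kloostermanExt_eq_kloostermanSum, kloostermanSum_trace (ZMod.isPrimitive_stdAddChar p) hu]
    simp only [← kloosterman_eq_kloostermanSum_s14]
    rw [ZMod.sum_sdiff_zero_eq_sum_Icc fun s ↦ kloosterman p (u * s) * traceInvCount (ZMod p) F 1 s]
  have hcount : ((p : ℂ) + 1) * ∑ s ∈ Icc 1 (p - 1), (traceInvCount (ZMod p) F 1 s : ℂ) +
      2 * traceInvCount (ZMod p) F 0 1 = traceInvCount (ZMod p) F 0 0 + (p : ℂ) ^ m + 1 := by
    have h := card_add_one_mul_sum_traceInvCount_one (K := ZMod p) (L := F)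
    rw [ZMod.card, hq, ZMod.sum_sdiff_zero_eq_sum_Icc] at h
    exact_mod_cast h
  refine ⟨hK, ?_⟩
  simp only [add_mul, one_mul, sum_add_distrib, ← mul_sum]
  linear_combination hcount - hK
end

section
/- For every binary field F_{2^m} with m ≥ 3, there exists a nonzero element x with tr(x) ≠ tr(x^{-1}), i.e. T_{01} > 0. -/
/-!
Suppose `tr x = tr x⁻¹` for every `x ≠ 0`, and pick `c` with `tr c = 1`. In characteristic two
`x⁻¹ + (x + c)⁻¹ = (c⁻¹ x (x + c))⁻¹`, so for `x ∉ {0, c}` the map `L x = tr (c⁻¹ x² + x)`,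
additive because squaring is, takes the value `tr x + tr (x + c) = tr c = 1`. Hence
`ker L ⊆ {0, c}` and `|F| = |ker L| · |im L| ≤ 4`. So once `|F| ≥ 8` some `x` has
`tr x ≠ tr x⁻¹`, and replacing `x` by `x⁻¹` if necessary gives `tr x = 0`, `tr x⁻¹ = 1`.
-/

theorem AddMonoidHom.card_le_two_mul_card_of_ker_subset_pair {G H : Type*} [AddGroup G]
    [AddGroup H] [Finite H] (f : G →+ H) {c : G} (hker : (f.ker : Set G) ⊆ {0, c}) :
    Nat.card G ≤ 2 * Nat.card H := by
  have hcard_ker : Nat.card f.ker ≤ 2 :=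
    calc Nat.card f.ker = (f.ker : Set G).ncard := (Nat.card_coe_set_eq _)
      _ ≤ ({0, c} : Set G).ncard := Set.ncard_le_ncard hker (Set.toFinite _)
      _ ≤ ({c} : Set G).ncard + 1 := Set.ncard_insert_le _ _
      _ = 2 := by rw [Set.ncard_singleton]
  have hindex : f.ker.index ≤ Nat.card H := by
    rw [AddSubgroup.index_ker]
    exact Nat.card_le_card_of_injective _ Subtype.val_injective
  rw [← f.ker.card_mul_index]
  exact Nat.mul_le_mul hcard_ker hindex

namespace CharTwo

variable {F : Type*} [Field F] [CharP F 2]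

theorem inv_add_inv_add_eq_inv {x c : F} (hx : x ≠ 0) (hxc : x + c ≠ 0) :
    x⁻¹ + (x + c)⁻¹ = (c⁻¹ * x * (x + c))⁻¹ := by
  rw [inv_add_inv hx hxc, ← add_assoc, add_self_eq_zero, zero_add, mul_assoc, mul_inv,
    inv_inv, div_eq_mul_inv]

end CharTwo

section TraceOfInverse

variable {F : Type*} [Field F] [Fintype F] [Algebra (ZMod 2) F]

theorem card_le_four_of_forall_trace_inv_eq_trace
    (h : ∀ x : F, x ≠ 0 → Algebra.trace (ZMod 2) F x⁻¹ = Algebra.trace (ZMod 2) F x) :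
    Fintype.card F ≤ 4 := by
  have : CharP F 2 := charP_of_injective_algebraMap' (ZMod 2) (A := F) 2
  set tr := Algebra.trace (ZMod 2) F
  obtain ⟨c, hc⟩ := Algebra.trace_surjective (ZMod 2) F 1
  have hc0 : c ≠ 0 := by rintro rfl; simp at hc
  let L : F →+ ZMod 2 := tr.toAddMonoidHom.comp
    ((AddMonoidHom.mulLeft c⁻¹).comp (frobenius F 2).toAddMonoidHom + AddMonoidHom.id F)
  have hL : ∀ x, x ≠ 0 → x ≠ c → L x = 1 := by
    intro x hx hxc
    have hxc' : x + c ≠ 0 := fun h => hxc (CharTwo.add_eq_zero.mp h)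
    have hprod : c⁻¹ * x * (x + c) ≠ 0 := mul_ne_zero (mul_ne_zero (inv_ne_zero hc0) hx) hxc'
    calc L x = tr (c⁻¹ * x * (x + c)) := by
          change tr (c⁻¹ * x ^ 2 + x) = _
          congr 1
          field_simp
      _ = tr (x⁻¹ + (x + c)⁻¹) := by rw [CharTwo.inv_add_inv_add_eq_inv hx hxc', h _ hprod]
      _ = tr x + tr (x + c) := by rw [map_add, h x hx, h _ hxc']
      _ = 1 := by rw [map_add, ← add_assoc, CharTwo.add_self_eq_zero, zero_add, hc]
  have hker : (L.ker : Set F) ⊆ {0, c} := by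
    intro x hx
    by_contra hx'
    simp only [Set.mem_insert_iff, Set.mem_singleton_iff, not_or] at hx'
    exact one_ne_zero ((hL x hx'.1 hx'.2).symm.trans hx)
  rw [Fintype.card_eq_nat_card]
  simpa using L.card_le_two_mul_card_of_ker_subset_pair hker

end TraceOfInverse

theorem binary_exists_trace_ne_cotrace (m : ℕ) (hm : 3 ≤ m) (F : Type*) [Field F] [Fintype F]
    [Algebra (ZMod 2) F] (hq : Fintype.card F = 2 ^ m) :
    (∃ x : F, x ≠ 0 ∧ Algebra.trace (ZMod 2) F x ≠ Algebra.trace (ZMod 2) F x⁻¹) ∧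
    0 < Nat.card {x : F | x ≠ 0 ∧ Algebra.trace (ZMod 2) F x = 0 ∧
      Algebra.trace (ZMod 2) F x⁻¹ = 1} := by
  have h8 : 8 ≤ Fintype.card F := hq ▸ Nat.pow_le_pow_right two_pos hm
  have hex : ∃ x : F, x ≠ 0 ∧ Algebra.trace (ZMod 2) F x ≠ Algebra.trace (ZMod 2) F x⁻¹ := by
    by_contra! h
    have := card_le_four_of_forall_trace_inv_eq_trace fun x hx => (h x hx).symm
    omega
  refine ⟨hex, ?_⟩
  obtain ⟨x, hx, hne⟩ := hex
  have hvalues : ∀ a b : ZMod 2, a ≠ b → a = 0 ∧ b = 1 ∨ a = 1 ∧ b = 0 := by decide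
  rw [Nat.card_pos_iff]
  refine ⟨?_, inferInstance⟩
  rcases hvalues _ _ hne with ⟨h0, h1⟩ | ⟨h1, h0⟩
  · exact ⟨x, hx, h0, h1⟩
  · exact ⟨x⁻¹, inv_ne_zero hx, h0, by rwa [inv_inv]⟩
end
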